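/- Let X be an A-correspondence, Y a B-correspondence, I ⊴ A, J ⊴ B closed ideals, R an A-B correspondence and S a B-A correspondence with X ≅ R ⊗_B S, S ⊗_A R ≅ Y, φ_R(I)R ⊆ RJ, and φ_S(J)S ⊆ SI. Then X_I ≅ R_J ⊗_{B/J} S_I and S_I ⊗_{A/I} R_J ≅ Y_J as correspondences over the quotient algebras. -/

import Mathlib

/-! Basic framework: C*-correspondences over (possibly non-unital) C*-algebras,
interior tensor products (characterized by their universal properties),
closed ideals, and unitary isomorphisms of correspondences. -/

noncomputable section

/-- A (non-degenerate) A–B C*-correspondence: a right Hilbert `B`-module `X`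
together with a left action of `A` by adjointable operators. -/
structure Corr (A B : Type) [NonUnitalCStarAlgebra A] [NonUnitalCStarAlgebra B] : Type 1 where
  X : Type
  [grp : NormedAddCommGroup X]
  [nsc : NormedSpace ℂ X]
  [cpl : CompleteSpace X]
  /-- the right action of `B` -/
  sm : X → B → X
  /-- the `B`-valued inner product (linear in the second variable) -/
  ip : X → X → B
  /-- the left action of `A` -/
  φ : A → X → X
  sm_add : ∀ x y b, sm (x + y) b = sm x b + sm y b
  sm_add' : ∀ x b c, sm x (b + c) = sm x b + sm x c
  sm_mul : ∀ x b c, sm (sm x b) c = sm x (b * c)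
  sm_smul : ∀ (t : ℂ) x b, sm (t • x) b = t • sm x b
  sm_smul' : ∀ (t : ℂ) x b, sm x (t • b) = t • sm x b
  ip_add : ∀ x y z, ip x (y + z) = ip x y + ip x z
  ip_smul : ∀ (t : ℂ) x y, ip x (t • y) = t • ip x y
  ip_sm : ∀ x y b, ip x (sm y b) = ip x y * b
  ip_star : ∀ x y, star (ip x y) = ip y x
  ip_pos : ∀ x, ∃ b, ip x x = star b * b
  ip_norm : ∀ x, ‖x‖ ^ 2 = ‖ip x x‖
  φ_add : ∀ a x y, φ a (x + y) = φ a x + φ a y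
  φ_add' : ∀ a b x, φ (a + b) x = φ a x + φ b x
  φ_smul : ∀ a (t : ℂ) x, φ a (t • x) = t • φ a x
  φ_smul' : ∀ (t : ℂ) a x, φ (t • a) x = t • φ a x
  φ_mul : ∀ a b x, φ (a * b) x = φ a (φ b x)
  φ_adj : ∀ a x y, ip (φ a x) y = ip x (φ (star a) y)
  /-- non-degeneracy of the left action -/
  nondeg : closure (Submodule.span ℂ {z | ∃ a x, z = φ a x} : Set X) = Set.univ

attribute [instance] Corr.grp Corr.nsc Corr.cpl

variable {A B C : Type} [NonUnitalCStarAlgebra A] [NonUnitalCStarAlgebra B]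
  [NonUnitalCStarAlgebra C]

/-- `Z.setR I` is the closed submodule `Z·I` of `Z`. -/
def Corr.setR (Z : Corr A B) (I : Set B) : Set Z.X :=
  closure (Submodule.span ℂ {x | ∃ ξ b, b ∈ I ∧ x = Z.sm ξ b} : Set Z.X)

/-- `Z.setL I` is the closed subspace `I·Z` of `Z`. -/
def Corr.setL (Z : Corr A B) (I : Set A) : Set Z.X :=
  closure (Submodule.span ℂ {x | ∃ a ξ, a ∈ I ∧ x = Z.φ a ξ} : Set Z.X)

/-- `Z⁻¹(I) = {a ∈ A : φ_Z(a)Z ⊆ ZI}`. -/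
def Corr.inv (Z : Corr A B) (I : Set B) : Set A := {a | ∀ ξ, Z.φ a ξ ∈ Z.setR I}

/-- The closed ideal of `B` generated by the inner products of `Z`. -/
def Corr.ipSet (Z : Corr A B) : Set B :=
  closure (Submodule.span ℂ {b | ∃ x y, b = Z.ip x y} : Set B)

/-- A generalized compact operator on the underlying Hilbert module of a correspondence:
one that is approximable in operator norm by finite sums of "rank one" operators
`θ_{ξ,η} : z ↦ ξ·⟨η,z⟩`. -/
def Corr.IsCompactOp (Z : Corr A B) (f : Z.X → Z.X) : Prop :=
  ∀ ε > (0 : ℝ), ∃ (n : ℕ) (ξ η : Fin n → Z.X),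
    ∀ z, ‖f z - ∑ i, Z.sm (ξ i) (Z.ip (η i) z)‖ ≤ ε * ‖z‖

/-- A closed (two-sided, automatically self-adjoint) ideal of a C*-algebra, as a set. -/
structure IsCIdeal {B : Type} [NonUnitalCStarAlgebra B] (I : Set B) : Prop where
  isClosed : IsClosed I
  zero_mem : (0 : B) ∈ I
  add_mem : ∀ x y, x ∈ I → y ∈ I → x + y ∈ I
  smul_mem : ∀ (t : ℂ) x, x ∈ I → t • x ∈ I
  mul_left_mem : ∀ b x, x ∈ I → b * x ∈ I
  mul_right_mem : ∀ b x, x ∈ I → x * b ∈ I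

/-- `t : Z₁ × Z₂ → T` exhibits `T` as the interior tensor product `Z₁ ⊗_B Z₂`. -/
structure IsTensor (Z₁ : Corr A B) (Z₂ : Corr B C) (T : Corr A C)
    (t : Z₁.X → Z₂.X → T.X) : Prop where
  add_left : ∀ x x' y, t (x + x') y = t x y + t x' y
  add_right : ∀ x y y', t x (y + y') = t x y + t x y'
  smul_left : ∀ (c : ℂ) x y, t (c • x) y = c • t x y
  balanced : ∀ x b y, t (Z₁.sm x b) y = t x (Z₂.φ b y)
  sm_right : ∀ x y c, t x (Z₂.sm y c) = T.sm (t x y) c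
  act_left : ∀ a x y, T.φ a (t x y) = t (Z₁.φ a x) y
  inner : ∀ x x' y y', T.ip (t x y) (t x' y') = Z₂.ip y (Z₂.φ (Z₁.ip x x') y')
  dense : closure (Submodule.span ℂ {z | ∃ x y, z = t x y} : Set T.X) = Set.univ

/-- `X ≅ Z₁ ⊗ Z₂` (unitary isomorphism with the interior tensor product). -/
def IsTensorProd (Z₁ : Corr A B) (Z₂ : Corr B C) (T : Corr A C) : Prop :=
  ∃ t, IsTensor Z₁ Z₂ T t

/-- A unitary isomorphism of A–B correspondences. -/
def CorrIso (Z W : Corr A B) : Prop :=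
  ∃ u : Z.X → W.X, Function.Surjective u ∧ (∀ x y, u (x + y) = u x + u y) ∧
    (∀ (c : ℂ) x, u (c • x) = c • u x) ∧ (∀ a x, u (Z.φ a x) = W.φ a (u x)) ∧
    (∀ x b, u (Z.sm x b) = W.sm (u x) b) ∧ (∀ x y, W.ip (u x) (u y) = Z.ip x y)

end

noncomputable section

variable {A A' B B' : Type} [NonUnitalCStarAlgebra A] [NonUnitalCStarAlgebra A']
  [NonUnitalCStarAlgebra B] [NonUnitalCStarAlgebra B']

/-- `π : B → B'` realizes `B'` as the quotient C*-algebra `B/I`. -/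
structure IsQuotAlg (π : B → B') (I : Set B) : Prop where
  surj : Function.Surjective π
  map_add : ∀ a b, π (a + b) = π a + π b
  map_mul : ∀ a b, π (a * b) = π a * π b
  map_star : ∀ a, π (star a) = star (π a)
  map_smul : ∀ (t : ℂ) a, π (t • a) = t • π a
  ker : ∀ a, π a = 0 ↔ a ∈ I

/-- `q : Z → Q` realizes the `A'–B'` correspondence `Q` as the quotient correspondence
`Z_J = Z/ZJ` (where `πA : A → A'` and `πB : B → B'` realize `A/I` and `B/J`). -/
structure IsQuotCorr (Z : Corr A B) (Q : Corr A' B') (πA : A → A') (πB : B → B')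
    (J : Set B) (q : Z.X → Q.X) : Prop where
  surj : Function.Surjective q
  map_add : ∀ ξ η, q (ξ + η) = q ξ + q η
  map_smul : ∀ (t : ℂ) ξ, q (t • ξ) = t • q ξ
  ker : ∀ ξ, q ξ = 0 ↔ ξ ∈ Z.setR J
  ip : ∀ ξ η, Q.ip (q ξ) (q η) = πB (Z.ip ξ η)
  sm : ∀ ξ b, Q.sm (q ξ) (πB b) = q (Z.sm ξ b)
  act : ∀ a ξ, Q.φ (πA a) (q ξ) = q (Z.φ a ξ)

/-! Let `T = Z₁ ⊗ Z₂` and pass to quotients `[·]` of `Z₁`, `Z₂` and `T`.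
On classes of elementary tensors the inner product of the quotient of `T` is
`⟨[r ⊗ s], [r' ⊗ s']⟩ = ⟨[s], φ(⟨[r], [r']⟩) [s']⟩`, which only depends on the classes
`[r]` and `[s]`. Since a vector of a Hilbert module is determined by its inner products,
`([r], [s]) ↦ [r ⊗ s]` is well defined; it inherits every identity of an interior tensor
product from `⊗`, and its span is dense because the quotient map is a continuous surjection. -/

namespace Corr

variable {A B : Type} [NonUnitalCStarAlgebra A] [NonUnitalCStarAlgebra B] (Z : Corr A B)

lemma ip_sub_right (x y z : Z.X) : Z.ip x (y - z) = Z.ip x y - Z.ip x z :=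
  (AddMonoidHom.mk' (Z.ip x) (Z.ip_add x)).map_sub y z

lemma ip_sub_left (x y z : Z.X) : Z.ip (x - y) z = Z.ip x z - Z.ip y z := by
  rw [← Z.ip_star, ip_sub_right, star_sub, Z.ip_star, Z.ip_star]

lemma eq_zero_of_ip_self_eq_zero {x : Z.X} (h : Z.ip x x = 0) : x = 0 :=
  norm_eq_zero.mp <| (pow_eq_zero_iff two_ne_zero).mp <| by rw [Z.ip_norm, h, norm_zero]

lemma eq_of_ip_eq {x y : Z.X} (hx : Z.ip x x = Z.ip x y) (hy : Z.ip y x = Z.ip y y) :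
    x = y := by
  refine sub_eq_zero.mp (Z.eq_zero_of_ip_self_eq_zero ?_)
  rw [ip_sub_left, ip_sub_right, ip_sub_right, hx, hy, sub_self, sub_self, sub_self]

end Corr

namespace IsQuotAlg

variable {B B' : Type} [NonUnitalCStarAlgebra B] [NonUnitalCStarAlgebra B']
  {π : B → B'} {I : Set B}

def toNonUnitalStarAlgHom (hπ : IsQuotAlg π I) : B →⋆ₙₐ[ℂ] B' where
  toFun := π
  map_smul' := hπ.map_smul
  map_zero' := by simpa using hπ.map_smul 0 0
  map_add' := hπ.map_add
  map_mul' := hπ.map_mul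
  map_star' := hπ.map_star

lemma norm_le (hπ : IsQuotAlg π I) (b : B) : ‖π b‖ ≤ ‖b‖ :=
  NonUnitalStarAlgHom.norm_apply_le hπ.toNonUnitalStarAlgHom b

end IsQuotAlg

namespace IsQuotCorr

variable {A A' B B' : Type} [NonUnitalCStarAlgebra A] [NonUnitalCStarAlgebra A']
  [NonUnitalCStarAlgebra B] [NonUnitalCStarAlgebra B']
  {Z : Corr A B} {Q : Corr A' B'} {πA : A → A'} {πB : B → B'} {J : Set B} {q : Z.X → Q.X}

lemma norm_le (hq : IsQuotCorr Z Q πA πB J q) (hπB : IsQuotAlg πB J) (ξ : Z.X) :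
    ‖q ξ‖ ≤ ‖ξ‖ := by
  rw [← sq_le_sq₀ (norm_nonneg _) (norm_nonneg _), Q.ip_norm, Z.ip_norm, hq.ip]
  exact hπB.norm_le _

def toCLM (hq : IsQuotCorr Z Q πA πB J q) (hπB : IsQuotAlg πB J) : Z.X →L[ℂ] Q.X :=
  LinearMap.mkContinuous { toFun := q, map_add' := hq.map_add, map_smul' := hq.map_smul } 1
    fun ξ => by simpa using hq.norm_le hπB ξ

end IsQuotCorr

namespace IsTensor

variable {A B C A' B' C' : Type} [NonUnitalCStarAlgebra A] [NonUnitalCStarAlgebra B]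
  [NonUnitalCStarAlgebra C] [NonUnitalCStarAlgebra A'] [NonUnitalCStarAlgebra B']
  [NonUnitalCStarAlgebra C']
  {Z₁ : Corr A B} {Z₂ : Corr B C} {T : Corr A C} {t : Z₁.X → Z₂.X → T.X}
  {JB : Set B} {JC : Set C} {πA : A → A'} {πB : B → B'} {πC : C → C'}
  {Q₁ : Corr A' B'} {q₁ : Z₁.X → Q₁.X} {Q₂ : Corr B' C'} {q₂ : Z₂.X → Q₂.X}
  {TQ : Corr A' C'} {qT : T.X → TQ.X}

lemma ip_quot (ht : IsTensor Z₁ Z₂ T t) (hq₁ : IsQuotCorr Z₁ Q₁ πA πB JB q₁)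
    (hq₂ : IsQuotCorr Z₂ Q₂ πB πC JC q₂) (hqT : IsQuotCorr T TQ πA πC JC qT)
    (r r' : Z₁.X) (s s' : Z₂.X) :
    TQ.ip (qT (t r s)) (qT (t r' s')) = Q₂.ip (q₂ s) (Q₂.φ (Q₁.ip (q₁ r) (q₁ r')) (q₂ s')) := by
  rw [hqT.ip, ht.inner, hq₁.ip, hq₂.act, hq₂.ip]

lemma quot_eq_of_quot_eq (ht : IsTensor Z₁ Z₂ T t) (hq₁ : IsQuotCorr Z₁ Q₁ πA πB JB q₁)
    (hq₂ : IsQuotCorr Z₂ Q₂ πB πC JC q₂) (hqT : IsQuotCorr T TQ πA πC JC qT)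
    {r r' : Z₁.X} {s s' : Z₂.X} (hr : q₁ r = q₁ r') (hs : q₂ s = q₂ s') :
    qT (t r s) = qT (t r' s') :=
  TQ.eq_of_ip_eq (by simp only [ht.ip_quot hq₁ hq₂ hqT, hr, hs])
    (by simp only [ht.ip_quot hq₁ hq₂ hqT, hr, hs])

def quotMap (hq₁ : IsQuotCorr Z₁ Q₁ πA πB JB q₁) (hq₂ : IsQuotCorr Z₂ Q₂ πB πC JC q₂)
    (t : Z₁.X → Z₂.X → T.X) (qT : T.X → TQ.X) (ξ : Q₁.X) (η : Q₂.X) : TQ.X :=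
  qT (t (Function.surjInv hq₁.surj ξ) (Function.surjInv hq₂.surj η))

lemma quotMap_apply (ht : IsTensor Z₁ Z₂ T t) (hq₁ : IsQuotCorr Z₁ Q₁ πA πB JB q₁)
    (hq₂ : IsQuotCorr Z₂ Q₂ πB πC JC q₂) (hqT : IsQuotCorr T TQ πA πC JC qT)
    (r : Z₁.X) (s : Z₂.X) : quotMap hq₁ hq₂ t qT (q₁ r) (q₂ s) = qT (t r s) :=
  ht.quot_eq_of_quot_eq hq₁ hq₂ hqT (Function.surjInv_eq hq₁.surj _)
    (Function.surjInv_eq hq₂.surj _)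

theorem quot (ht : IsTensor Z₁ Z₂ T t) (hπA : Function.Surjective πA)
    (hπB : Function.Surjective πB) (hπC : IsQuotAlg πC JC) (hq₁ : IsQuotCorr Z₁ Q₁ πA πB JB q₁)
    (hq₂ : IsQuotCorr Z₂ Q₂ πB πC JC q₂) (hqT : IsQuotCorr T TQ πA πC JC qT) :
    IsTensor Q₁ Q₂ TQ (quotMap hq₁ hq₂ t qT) := by
  have happly := ht.quotMap_apply hq₁ hq₂ hqT
  constructor
  case dense =>
    have hdense := hqT.surj.denseRange.dense_image (hqT.toCLM hπC).continuous
      (dense_iff_closure_eq.mpr ht.dense)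
    refine dense_iff_closure_eq.mp (hdense.mono ?_)
    refine (Submodule.image_span_subset (hqT.toCLM hπC).toLinearMap _ _).mpr ?_
    rintro _ ⟨r, s, rfl⟩
    exact Submodule.subset_span ⟨q₁ r, q₂ s, (happly r s).symm⟩
  all_goals simp only [hq₁.surj.forall, hq₂.surj.forall, hπA.forall, hπB.forall,
    hπC.surj.forall]
  · intro r r' s
    rw [← hq₁.map_add, happly, happly, happly, ht.add_left, hqT.map_add]
  · intro r s s'
    rw [← hq₂.map_add, happly, happly, happly, ht.add_right, hqT.map_add]
  · intro c r s
    rw [← hq₁.map_smul, happly, happly, ht.smul_left, hqT.map_smul]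
  · intro r b s
    rw [hq₁.sm, hq₂.act, happly, happly, ht.balanced]
  · intro r s c
    rw [hq₂.sm, happly, happly, ht.sm_right, hqT.sm]
  · intro a r s
    rw [hq₁.act, happly, happly, hqT.act, ht.act_left]
  · intro r r' s s'
    rw [happly, happly, ht.ip_quot hq₁ hq₂ hqT]

end IsTensor

theorem IsTensorProd.quot {A B C A' B' C' : Type} [NonUnitalCStarAlgebra A]
    [NonUnitalCStarAlgebra B] [NonUnitalCStarAlgebra C] [NonUnitalCStarAlgebra A']
    [NonUnitalCStarAlgebra B'] [NonUnitalCStarAlgebra C']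
    {Z₁ : Corr A B} {Z₂ : Corr B C} {T : Corr A C} (hT : IsTensorProd Z₁ Z₂ T)
    {JB : Set B} {JC : Set C} {πA : A → A'} {πB : B → B'} {πC : C → C'}
    (hπA : Function.Surjective πA) (hπB : Function.Surjective πB) (hπC : IsQuotAlg πC JC)
    {Q₁ : Corr A' B'} {q₁ : Z₁.X → Q₁.X} (hq₁ : IsQuotCorr Z₁ Q₁ πA πB JB q₁)
    {Q₂ : Corr B' C'} {q₂ : Z₂.X → Q₂.X} (hq₂ : IsQuotCorr Z₂ Q₂ πB πC JC q₂)
    {TQ : Corr A' C'} {qT : T.X → TQ.X} (hqT : IsQuotCorr T TQ πA πC JC qT) :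
    IsTensorProd Q₁ Q₂ TQ :=
  let ⟨_, ht⟩ := hT
  ⟨_, ht.quot hπA hπB hπC hq₁ hq₂ hqT⟩

theorem stmt10_general (X : Corr A A) (Y : Corr B B) (R : Corr A B) (S : Corr B A)
    (I : Set A) (J : Set B)
    (hX : IsTensorProd R S X) (hY : IsTensorProd S R Y)
    (πA : A → A') (hπA : IsQuotAlg πA I) (πB : B → B') (hπB : IsQuotAlg πB J)
    (XI : Corr A' A') (qX : X.X → XI.X) (hqX : IsQuotCorr X XI πA πA I qX)
    (YJ : Corr B' B') (qY : Y.X → YJ.X) (hqY : IsQuotCorr Y YJ πB πB J qY)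
    (RJ : Corr A' B') (qR : R.X → RJ.X) (hqR : IsQuotCorr R RJ πA πB J qR)
    (SI : Corr B' A') (qS : S.X → SI.X) (hqS : IsQuotCorr S SI πB πA I qS) :
    IsTensorProd RJ SI XI ∧ IsTensorProd SI RJ YJ :=
  ⟨hX.quot hπA.surj hπB.surj hπA hqR hqS hqX, hY.quot hπB.surj hπA.surj hπB hqS hqR hqY⟩

/-- if `X ≅ R ⊗_B S`, `S ⊗_A R ≅ Y`, `φ_R(I)R ⊆ RJ` and `φ_S(J)S ⊆ SI`,
then `X_I ≅ R_J ⊗_{B/J} S_I` and `S_I ⊗_{A/I} R_J ≅ Y_J`. -/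
theorem stmt10 (X : Corr A A) (Y : Corr B B) (R : Corr A B) (S : Corr B A)
    (I : Set A) (hI : IsCIdeal I) (J : Set B) (hJ : IsCIdeal J)
    (hX : IsTensorProd R S X) (hY : IsTensorProd S R Y)
    (hRinv : ∀ a ∈ I, ∀ r, R.φ a r ∈ R.setR J)
    (hSinv : ∀ b ∈ J, ∀ s, S.φ b s ∈ S.setR I)
    (πA : A → A') (hπA : IsQuotAlg πA I) (πB : B → B') (hπB : IsQuotAlg πB J)
    (XI : Corr A' A') (qX : X.X → XI.X) (hqX : IsQuotCorr X XI πA πA I qX)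
    (YJ : Corr B' B') (qY : Y.X → YJ.X) (hqY : IsQuotCorr Y YJ πB πB J qY)
    (RJ : Corr A' B') (qR : R.X → RJ.X) (hqR : IsQuotCorr R RJ πA πB J qR)
    (SI : Corr B' A') (qS : S.X → SI.X) (hqS : IsQuotCorr S SI πB πA I qS) :
    IsTensorProd RJ SI XI ∧ IsTensorProd SI RJ YJ :=
  stmt10_general X Y R S I J hX hY πA hπA πB hπB XI qX hqX YJ qY hqY RJ qR hqR SI qS hqS
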